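/- Let m be an even positive integer and let 𝒞 be the order m dimension n symmetric Cauchy tensor with generating vector c ∈ ℝ^n, and define f(x) = 𝒞x^m. If 𝒞 is positive definite, then f is strictly monotone increasing on the nonnegative orthant: for all x, y ∈ ℝ^n with 0 ≤ y ≤ x (componentwise) and x ≠ y, f(y) < f(x). -/

import Mathlib

/-!
Testing positive definiteness on a coordinate vector `eₖ` gives `𝒞eₖᵐ = 1 / (m cₖ) > 0`, so every
`cₖ` is positive. Then all denominators `c_{i₁} + ⋯ + c_{iₘ}` are positive, every term of `𝒞xᵐ`
is monotone on the nonnegative orthant, and the diagonal term `xₖᵐ / (m cₖ)` is strictly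
increasing at a coordinate `k` with `yₖ < xₖ`.
-/

open Finset

noncomputable def cauchyForm {ι : Type*} [Fintype ι] (m : ℕ) (c x : ι → ℝ) : ℝ :=
  ∑ i : Fin m → ι, (∏ j, x (i j)) / ∑ j, c (i j)

section
variable {ι : Type*} [Fintype ι] {m : ℕ} {c : ι → ℝ}

theorem cauchyForm_single [DecidableEq ι] (k : ι) (a : ℝ) :
    cauchyForm m c (Pi.single k a) = a ^ m / (m * c k) := by
  rw [cauchyForm, sum_eq_single_of_mem (fun _ => k) (mem_univ _)]
  · simp
  · intro i _ hi
    obtain ⟨j, hj⟩ : ∃ j, i j ≠ k := not_forall.mp fun h => hi (funext h)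
    rw [prod_eq_zero (mem_univ j) (by simp [hj]), zero_div]

theorem pos_of_cauchyForm_pos (hpd : ∀ x, x ≠ 0 → 0 < cauchyForm m c x) (k : ι) : 0 < c k := by
  classical
  have h := hpd (Pi.single k 1) (Pi.single_ne_zero_iff.mpr one_ne_zero)
  rw [cauchyForm_single, one_pow, one_div, inv_pos] at h
  exact pos_of_mul_pos_right h m.cast_nonneg

theorem cauchyForm_strictMonoOn (hm : 0 < m) (hc : ∀ k, 0 < c k) :
    StrictMonoOn (cauchyForm m c) (Set.Ici 0) := by
  intro y hy x _ hyx
  obtain ⟨hle, k, hk⟩ := Pi.lt_def.mp hyx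
  have hden : ∀ i : Fin m → ι, 0 < ∑ j, c (i j) := fun i =>
    sum_pos (fun j _ => hc (i j)) (univ_nonempty_iff.mpr (Fin.pos_iff_nonempty.mp hm))
  refine sum_lt_sum (fun i _ => ?_) ⟨fun _ => k, mem_univ _, ?_⟩
  · exact div_le_div_of_nonneg_right
      (prod_le_prod (fun j _ => hy (i j)) fun j _ => hle (i j)) (hden i).le
  · refine div_lt_div_of_pos_right ?_ (hden _)
    simpa using pow_lt_pow_left₀ hk (hy k) hm.ne'

end

theorem cauchy_tensor_pd_implies_strict_monotone_general
    (m n : ℕ) (hm : 0 < m) (c : Fin n → ℝ)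
    (hpd : ∀ x : Fin n → ℝ, x ≠ 0 →
        0 < ∑ i : Fin m → Fin n, (∏ j, x (i j)) / (∑ j, c (i j))) :
    ∀ x y : Fin n → ℝ, (∀ i, 0 ≤ y i) → (∀ i, y i ≤ x i) → x ≠ y →
      (∑ i : Fin m → Fin n, (∏ j, y (i j)) / (∑ j, c (i j)))
        < ∑ i : Fin m → Fin n, (∏ j, x (i j)) / (∑ j, c (i j)) := by
  intro x y hy hyx hxy
  exact cauchyForm_strictMonoOn hm (pos_of_cauchyForm_pos hpd) hy
    (fun i => (hy i).trans (hyx i)) (lt_of_le_of_ne hyx hxy.symm)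

/-- If an even order symmetric Cauchy tensor is positive definite, then
`f(x) = 𝒞xᵐ` is strictly monotone increasing on the nonnegative orthant. -/
theorem cauchy_tensor_pd_implies_strict_monotone
    (m n : ℕ) (hm : 0 < m) (hme : Even m) (c : Fin n → ℝ)
    (hc : ∀ i : Fin m → Fin n, (∑ j, c (i j)) ≠ 0)
    (hpd : ∀ x : Fin n → ℝ, x ≠ 0 →
        0 < ∑ i : Fin m → Fin n, (∏ j, x (i j)) / (∑ j, c (i j))) :
    ∀ x y : Fin n → ℝ, (∀ i, 0 ≤ y i) → (∀ i, y i ≤ x i) → x ≠ y →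
      (∑ i : Fin m → Fin n, (∏ j, y (i j)) / (∑ j, c (i j)))
        < ∑ i : Fin m → Fin n, (∏ j, x (i j)) / (∑ j, c (i j)) :=
  cauchy_tensor_pd_implies_strict_monotone_general m n hm c hpd
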